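/- For every integer p ≥ 1, ∑_{q=1}^∞ ( ∑_{(s_1,…,s_q) ∈ ℕ^q with s_1+⋯+s_q = p} θ(s_1)·θ(s_2)⋯θ(s_q) ) = 1 + 2·h(p), where for each q the inner sum runs over all q-tuples of nonnegative integers summing to p. -/

import Mathlib

/-!
Let `Θ` and `H` be the generating functions of `theta` and `hfun`. The tuple sums are the
coefficients of the powers of `Θ`, so the left-hand side is the `p`-th coefficient of
`Θ + Θ² + ⋯`. Since `theta ≥ 0` and `theta 0 = 3/4 < 1`, this series converges coefficientwise
to the unique solution `G` of the renewal equation `G = Θ + Θ G`, so it suffices to check that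
`1/(1 - X) + 2 H` solves it. Now `H = (1 - X)^(-1/2)`, i.e. `(1 - X) H² = 1`, and `theta` is twice
the second difference of `hfun`, i.e. `X² Θ = 2 (1 - X)² H - 2 + 3 X`; with `u = (1 - X) H` and
`u² = 1 - X` the renewal equation becomes a polynomial identity in `u`.
-/

/-- The critical offspring distribution: θ(k) = 3·(2k−1)!! / (2^{k+1}·(k+2)!),
with (2k−1)!! read as 1 when k = 0 (natural subtraction gives 0!! = 1). -/
noncomputable def theta (k : ℕ) : ℝ :=
  3 * (Nat.doubleFactorial (2 * k - 1) : ℝ) / (2 ^ (k + 1) * (Nat.factorial (k + 2) : ℝ))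

/-- h(k) = 4^{−k}·binom(2k,k), with binom the central binomial coefficient. -/
noncomputable def hfun (k : ℕ) : ℝ := (Nat.choose (2 * k) k : ℝ) / 4 ^ k

open Finset hiding mk
open PowerSeries

theorem Finset.Nat.sum_antidiagonalTuple_succ {M : Type*} [AddCommMonoid M] (k n : ℕ)
    (F : (Fin (k + 1) → ℕ) → M) :
    ∑ s ∈ Nat.antidiagonalTuple (k + 1) n, F s =
      ∑ ni ∈ antidiagonal n, ∑ x ∈ Nat.antidiagonalTuple k ni.2, F (Fin.cons ni.1 x) := by
  simp only [Finset.sum_eq_multiset_sum, Nat.antidiagonalTuple, Multiset.Nat.antidiagonalTuple,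
    List.Nat.antidiagonalTuple, List.flatMap, HasAntidiagonal.antidiagonal,
    Multiset.Nat.antidiagonal, Multiset.map_coe, Multiset.sum_coe, List.map_flatten,
    List.sum_flatten, List.map_map, Function.comp_def]

theorem PowerSeries.coeff_mk_pow {R : Type*} [CommSemiring R] (f : ℕ → R) (k n : ℕ) :
    coeff n (mk f ^ k) = ∑ s ∈ Nat.antidiagonalTuple k n, ∏ i, f (s i) := by
  induction k generalizing n with
  | zero => cases n <;> simp [coeff_one]
  | succ k ih =>
    simp [pow_succ', coeff_mul, Nat.sum_antidiagonalTuple_succ, Fin.prod_univ_succ, ih, mul_sum]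

theorem PowerSeries.coeff_mk_pow_nonneg {f : ℕ → ℝ} (hf : ∀ k, 0 ≤ f k) (k n : ℕ) :
    0 ≤ coeff n (mk f ^ k) := by
  rw [coeff_mk_pow]
  exact sum_nonneg fun s _ ↦ prod_nonneg fun i _ ↦ hf (s i)

theorem hasSum_of_succ_eq_mul_add {a c : ℕ → ℝ} {r C : ℝ} (ha : ∀ q, 0 ≤ a q)
    (hc : ∀ q, 0 ≤ c q) (hr : r < 1) (hcC : HasSum c C)
    (hrec : ∀ q, a (q + 1) = r * a q + c q) :
    HasSum a ((a 0 + C) / (1 - r)) := by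
  have hsum_le (N : ℕ) : ∑ q ∈ range N, a q ≤ (a 0 + C) / (1 - r) := by
    have hsucc : ∑ q ∈ range (N + 1), a q =
        a 0 + r * ∑ q ∈ range N, a q + ∑ q ∈ range N, c q := by
      simp only [sum_range_succ', hrec, sum_add_distrib, mul_sum]
      ring
    have hcN : ∑ q ∈ range N, c q ≤ C := sum_le_hasSum _ (fun q _ ↦ hc q) hcC
    have hmono : ∑ q ∈ range N, a q ≤ ∑ q ∈ range (N + 1), a q :=
      sum_le_sum_of_subset_of_nonneg (range_subset_range.2 N.le_succ) fun q _ _ ↦ ha q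
    rw [le_div_iff₀ (by linarith)]
    linarith
  have hL : HasSum a (∑' q, a q) := (summable_of_sum_range_le ha hsum_le).hasSum
  have htail : HasSum (fun q ↦ a (q + 1)) (∑' q, a q - a 0) := by
    simpa using (hasSum_nat_add_iff' 1).2 hL
  have hshift : ∑' q, a q - a 0 = r * ∑' q, a q + C :=
    htail.unique (by simpa only [hrec] using (hL.mul_left r).add hcC)
  convert hL using 1
  rw [div_eq_iff (by linarith)]
  linarith

theorem hasSum_coeff_pow_succ_of_renewal {f g : ℕ → ℝ} (hf : ∀ k, 0 ≤ f k) (hf0 : f 0 < 1)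
    (hg : mk g = mk f + mk f * mk g) (p : ℕ) :
    HasSum (fun q ↦ coeff p (mk f ^ (q + 1))) (g p) := by
  induction p using Nat.strong_induction_on with
  | _ p ih =>
  -- The term `(0, p)` of the antidiagonal reproduces coefficient `p`; the others are lower.
  set D := (antidiagonal p).erase (0, p)
  have split (x : ℕ → ℝ) :
      ∑ ij ∈ antidiagonal p, f ij.1 * x ij.2 = f 0 * x p + ∑ ij ∈ D, f ij.1 * x ij.2 :=
    (add_sum_erase (antidiagonal p) (fun ij ↦ f ij.1 * x ij.2) (a := (0, p)) (by simp)).symm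
  have hC : HasSum (fun q ↦ ∑ ij ∈ D, f ij.1 * coeff ij.2 (mk f ^ (q + 1)))
      (∑ ij ∈ D, f ij.1 * g ij.2) := hasSum_sum fun ij hij ↦ by
    have hj : ij.2 < p := by
      have := mem_antidiagonal.1 (mem_of_mem_erase hij)
      have := ne_of_mem_erase hij
      grind
    exact (ih ij.2 hj).mul_left (f ij.1)
  have hgp : g p = f p + (f 0 * g p + ∑ ij ∈ D, f ij.1 * g ij.2) := by
    simpa only [map_add, coeff_mul, coeff_mk, split] using congrArg (coeff p) hg
  have hsum := hasSum_of_succ_eq_mul_add (fun q ↦ coeff_mk_pow_nonneg hf (q + 1) p)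
    (fun q ↦ sum_nonneg fun ij _ ↦ mul_nonneg (hf ij.1) (coeff_mk_pow_nonneg hf (q + 1) ij.2))
    hf0 hC fun q ↦ by
      simp only [pow_succ' (mk f) (q + 1), coeff_mul, coeff_mk]
      exact split fun j ↦ coeff j (mk f ^ (q + 1))
  convert hsum using 1
  rw [pow_one, coeff_mk, eq_div_iff (by linarith)]
  linarith

theorem Nat.centralBinom_mul_factorial (k : ℕ) :
    k.centralBinom * k.factorial = (2 * k - 1).doubleFactorial * 2 ^ k := by
  have hfac : k.centralBinom * k.factorial * k.factorial = (2 * k).factorial := by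
    simpa [Nat.centralBinom, two_mul] using
      Nat.choose_mul_factorial_mul_factorial (Nat.le_add_right k k)
  have hdf : (2 * k - 1).doubleFactorial * (2 ^ k * k.factorial) = (2 * k).factorial := by
    rcases k with _ | k
    · rfl
    · rw [← Nat.doubleFactorial_two_mul, mul_comm, show 2 * (k + 1) = 2 * k + 1 + 1 by ring,
        Nat.factorial_eq_mul_doubleFactorial]
      rfl
  exact Nat.eq_of_mul_eq_mul_right k.factorial_pos (by rw [hfac, mul_assoc, hdf])

theorem hfun_zero : hfun 0 = 1 := by simp [hfun]

theorem hfun_succ (k : ℕ) : 2 * (k + 1) * hfun (k + 1) = (2 * k + 1) * hfun k := by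
  have h : ((k + 1 : ℕ) : ℝ) * (k + 1).centralBinom = 2 * (2 * k + 1) * k.centralBinom := by
    exact_mod_cast Nat.succ_mul_centralBinom_succ k
  simp only [hfun, ← Nat.centralBinom_eq_two_mul_choose] at h ⊢
  push_cast at h
  field_simp
  linear_combination 2 * 4 ^ k * h

theorem theta_eq_hfun_div (k : ℕ) : theta k = 3 * hfun k / (2 * (k + 1) * (k + 2)) := by
  have h : (k.centralBinom : ℝ) * k.factorial = (2 * k - 1).doubleFactorial * 2 ^ k := by
    exact_mod_cast Nat.centralBinom_mul_factorial k
  have hD : ((2 * k - 1).doubleFactorial : ℝ) = k.centralBinom * k.factorial / 2 ^ k := by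
    rw [eq_div_iff (by positivity)]
    exact h.symm
  have h4 : (4 : ℝ) ^ k = 2 ^ k * 2 ^ k := by rw [← mul_pow]; norm_num
  simp only [theta, hfun, ← Nat.centralBinom_eq_two_mul_choose, Nat.factorial_succ, hD, h4]
  push_cast
  field_simp
  ring

theorem theta_eq_second_difference (k : ℕ) :
    theta k = 2 * (hfun k - 2 * hfun (k + 1) + hfun (k + 2)) := by
  have h₁ : hfun (k + 1) = (2 * k + 1) / (2 * (k + 1)) * hfun k := by
    rw [div_mul_eq_mul_div, eq_div_iff (by positivity)]
    linear_combination hfun_succ k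
  have h₂ : hfun (k + 2) = (2 * k + 3) / (2 * (k + 2)) * hfun (k + 1) := by
    have h := hfun_succ (k + 1)
    push_cast at h
    rw [div_mul_eq_mul_div, eq_div_iff (by positivity)]
    linear_combination h
  rw [theta_eq_hfun_div, h₂, h₁]
  field_simp
  ring

theorem theta_nonneg (k : ℕ) : 0 ≤ theta k := by
  unfold theta
  positivity

theorem theta_zero_lt_one : theta 0 < 1 := by norm_num [theta]

-- `hfun_succ` says `2 (1 - X) H' = H`, so `(1 - X) H²` has derivative `0`.
theorem one_sub_X_mul_mk_hfun_sq : (1 - X) * mk hfun ^ 2 = 1 := by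
  have hode : 2 * (1 - X) * d⁄dX ℝ (mk hfun) = mk hfun := by
    ext n
    rw [← map_ofNat C 2, mul_assoc, coeff_C_mul, sub_mul, one_mul, map_sub]
    rcases n with _ | n
    · simp only [coeff_zero_X_mul, sub_zero, coeff_derivative, coeff_mk, zero_add, Nat.cast_zero]
      linear_combination hfun_succ 0
    · have h := hfun_succ (n + 1)
      push_cast at h
      simp only [coeff_derivative, coeff_mk, coeff_succ_X_mul, Nat.cast_add, Nat.cast_one]
      linear_combination h
  apply derivative.ext
  · simp only [Derivation.leibniz, Derivation.leibniz_pow, smul_eq_mul, nsmul_eq_mul, map_sub,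
      Derivation.map_one_eq_zero, derivative_X]
    linear_combination mk hfun * hode
  · simp [hfun_zero]

theorem X_sq_mul_mk_theta : X ^ 2 * mk theta = 2 * (1 - X) ^ 2 * mk hfun - 2 + 3 * X := by
  rw [show 2 * (1 - X) ^ 2 * mk hfun - 2 + 3 * X =
      C 2 * mk hfun - C 4 * (X * mk hfun) + C 2 * (X ^ 2 * mk hfun) - C 2 + C 3 * X by
    simp only [map_ofNat]; ring]
  ext n
  rcases n with _ | _ | n
  · simp [hfun_zero]
  · norm_num [coeff_X_pow_mul', coeff_C_mul, coeff_C, hfun]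
  · simp only [coeff_X_pow_mul', le_add_iff_nonneg_left, zero_le, ↓reduceIte, Nat.reduceSubDiff,
      coeff_mk, theta_eq_second_difference, map_add, map_sub, coeff_C_mul, coeff_succ_X_mul,
      coeff_succ_C, coeff_succ_mul_X, sub_zero, add_zero]
    ring

theorem mk_one_add_two_mul_hfun_eq :
    mk (fun p ↦ 1 + 2 * hfun p) = mk theta + mk theta * mk (fun p ↦ 1 + 2 * hfun p) := by
  set G := mk (fun p ↦ 1 + 2 * hfun p)
  have hG : (1 - X) * G = 1 + 2 * (1 - X) * mk hfun := by
    have : G = mk 1 + C 2 * mk hfun := by ext n; simp [G, coeff_C_mul]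
    rw [this, mul_add, mul_comm, mk_one_mul_one_sub_eq_one, map_ofNat]
    ring
  have h1X : (1 - X : ℝ⟦X⟧) ≠ 0 := fun h ↦ by simpa using congrArg constantCoeff h
  refine mul_left_cancel₀ (mul_ne_zero (pow_ne_zero 2 X_ne_zero) h1X) ?_
  linear_combination (X ^ 2 - X ^ 2 * mk theta) * hG
    - ((1 - X) + 1 + 2 * (1 - X) * mk hfun) * X_sq_mul_mk_theta
    - 4 * (1 - X) ^ 2 * one_sub_X_mul_mk_hfun_sq

theorem green_function_identity_general (p : ℕ) :
    HasSum
      (fun q : ℕ =>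
        ∑ s ∈ Finset.Nat.antidiagonalTuple (q + 1) p, ∏ i, theta (s i))
      (1 + 2 * hfun p) := by
  simp only [← coeff_mk_pow]
  exact hasSum_coeff_pow_succ_of_renewal theta_nonneg theta_zero_lt_one
    mk_one_add_two_mul_hfun_eq p

/-- For every p ≥ 1,
∑_{q=1}^∞ ( ∑_{s₁+⋯+s_q = p} θ(s₁)⋯θ(s_q) ) = 1 + 2·h(p),
where the inner sum is over q-tuples of nonnegative integers summing to p. -/
theorem green_function_identity (p : ℕ) (hp : 1 ≤ p) :
    HasSum
      (fun q : ℕ =>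
        ∑ s ∈ Finset.Nat.antidiagonalTuple (q + 1) p, ∏ i, theta (s i))
      (1 + 2 * hfun p) :=
  green_function_identity_general p
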